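/- arXiv:2510.21431 — 7 statements merged into one kernel-verified Lean document; each statement's English description precedes it below -/
import Mathlib

section
/- Let M ≥ 0 be a real number and let (x_τ)_{τ≥0} be a sequence of real numbers with x_0 ≥ 0 and satisfying x_τ ≥ 1 + √(M · x_{τ-1}) for every integer τ ≥ 1. Then for every integer τ ≥ 1 one has x_τ ≥ M^(1 − 2^(1−τ)), where the power is real exponentiation. -/
/-!
Write `e τ = 1 - 2 ^ (1 - τ)`, so that `e 1 = 0` and `e (τ + 1) = (1 + e τ) / 2`.
Then `x 1 ≥ 1 = M ^ e 1`, and if `x τ ≥ M ^ e τ` then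
`x (τ + 1) ≥ √(M * x τ) ≥ √(M ^ (1 + e τ)) = M ^ e (τ + 1)`.
-/

open Real

lemma one_sub_two_rpow_one_sub_add_one (t : ℝ) :
    1 - (2 : ℝ) ^ (1 - (t + 1)) = (1 + (1 - (2 : ℝ) ^ (1 - t))) / 2 := by
  rw [show (1 : ℝ) - t = 1 + (1 - (t + 1)) by ring, rpow_add two_pos, rpow_one]
  ring

lemma one_sub_two_rpow_one_sub_nonneg {t : ℝ} (ht : 1 ≤ t) : 0 ≤ 1 - (2 : ℝ) ^ (1 - t) := by
  linarith [rpow_le_one_of_one_le_of_nonpos one_le_two (by linarith : 1 - t ≤ 0)]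

lemma sqrt_mul_rpow_self {M e : ℝ} (hM : 0 ≤ M) (he : 1 + e ≠ 0) :
    √(M * M ^ e) = M ^ ((1 + e) / 2) := by
  rw [← rpow_one_add' hM he, sqrt_eq_rpow, ← rpow_mul hM, one_div, div_eq_mul_inv]

lemma rpow_one_add_div_two_le {M e y : ℝ} (hM : 0 ≤ M) (he : 0 ≤ e) (hy : M ^ e ≤ y) :
    M ^ ((1 + e) / 2) ≤ 1 + √(M * y) := by
  calc M ^ ((1 + e) / 2) = √(M * M ^ e) := (sqrt_mul_rpow_self hM (by positivity)).symm
    _ ≤ √(M * y) := sqrt_le_sqrt (mul_le_mul_of_nonneg_left hy hM)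
    _ ≤ 1 + √(M * y) := le_add_of_nonneg_left zero_le_one

theorem stmt_0_general (M : ℝ) (hM : 0 ≤ M) (x : ℕ → ℝ)
    (hrec : ∀ τ : ℕ, 1 ≤ τ → x τ ≥ 1 + Real.sqrt (M * x (τ - 1))) :
    ∀ τ : ℕ, 1 ≤ τ → x τ ≥ M ^ ((1 : ℝ) - (2 : ℝ) ^ ((1 : ℝ) - (τ : ℝ))) := by
  intro τ hτ
  induction τ, hτ using Nat.le_induction with
  | base =>
    have h1 := hrec 1 le_rfl
    norm_num at h1 ⊢
    linarith [sqrt_nonneg (M * x 0)]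
  | succ n hn ih =>
    have hstep := hrec (n + 1) (by omega)
    rw [Nat.add_sub_cancel] at hstep
    rw [Nat.cast_add_one, one_sub_two_rpow_one_sub_add_one]
    exact (rpow_one_add_div_two_le hM
      (one_sub_two_rpow_one_sub_nonneg (by exact_mod_cast hn)) ih).trans hstep

/-- Epoch-length growth lemma: if `x 0 ≥ 0` and `x τ ≥ 1 + √(M · x (τ-1))` for all
`τ ≥ 1`, then `x τ ≥ M ^ (1 - 2^(1-τ))` for all `τ ≥ 1` (real exponentiation). -/
theorem stmt_0 (M : ℝ) (hM : 0 ≤ M) (x : ℕ → ℝ) (hx0 : 0 ≤ x 0)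
    (hrec : ∀ τ : ℕ, 1 ≤ τ → x τ ≥ 1 + Real.sqrt (M * x (τ - 1))) :
    ∀ τ : ℕ, 1 ≤ τ → x τ ≥ M ^ ((1 : ℝ) - (2 : ℝ) ^ ((1 : ℝ) - (τ : ℝ))) :=
  stmt_0_general M hM x hrec
end

section
/- Let M ≥ 2 be a real number and let (x_τ)_{τ≥0} be a sequence of real numbers with x_0 ≥ 0 and x_τ ≥ 1 + √(M · x_{τ-1}) for every integer τ ≥ 1. Then for every integer τ with τ − 1 ≥ log₂(log₂ M), one has x_τ ≥ M/2. -/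
/-!
Put `a n = 1 - 2⁻ⁿ`. If `x (n+1) ≥ M ^ a n`, the recursion gives
`x (n+2) ≥ √(M · M ^ a n) = M ^ a (n+1)`, and `x 1 ≥ 1 = M ^ a 0`; so the ratio `M / x (n+1)`
is at most `M ^ 2⁻ⁿ`, which is at most `2` as soon as `2ⁿ ≥ log₂ M`.
-/

open Real

lemma rpow_one_sub_inv_two_pow_le {M : ℝ} (hM : 0 < M) {y : ℕ → ℝ} (hy₀ : 1 ≤ y 0)
    (hy : ∀ n, √(M * y n) ≤ y (n + 1)) (n : ℕ) : M ^ (1 - ((2 : ℝ) ^ n)⁻¹) ≤ y n := by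
  induction n with
  | zero => simpa using hy₀
  | succ n ih =>
    have hsq : (M ^ (1 - ((2 : ℝ) ^ (n + 1))⁻¹)) ^ 2 = M * M ^ (1 - ((2 : ℝ) ^ n)⁻¹) := by
      rw [← rpow_natCast, ← rpow_mul hM.le, Nat.cast_ofNat,
        show (1 - ((2 : ℝ) ^ (n + 1))⁻¹) * 2 = 1 + (1 - ((2 : ℝ) ^ n)⁻¹) by field_simp; ring,
        rpow_add hM, rpow_one]
    calc M ^ (1 - ((2 : ℝ) ^ (n + 1))⁻¹) = √(M * M ^ (1 - ((2 : ℝ) ^ n)⁻¹)) := by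
          rw [← hsq, sqrt_sq (rpow_pos_of_pos hM _).le]
      _ ≤ √(M * y n) := sqrt_le_sqrt (mul_le_mul_of_nonneg_left ih hM.le)
      _ ≤ y (n + 1) := hy n

lemma half_le_rpow_one_sub_inv {M t : ℝ} (hM : 0 < M) (ht : 0 < t) (hMt : logb 2 M ≤ t) :
    M / 2 ≤ M ^ (1 - t⁻¹) := by
  have hroot : M ^ t⁻¹ ≤ 2 :=
    (rpow_inv_le_iff_of_pos hM.le zero_le_two ht).2 ((logb_le_iff_le_rpow one_lt_two hM).1 hMt)
  rw [rpow_sub hM, rpow_one]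
  exact div_le_div_of_nonneg_left hM.le (by positivity) hroot

theorem stmt_2_general (M : ℝ) (hM : 2 ≤ M) (x : ℕ → ℝ)
    (hrec : ∀ τ : ℕ, 1 ≤ τ → x τ ≥ 1 + Real.sqrt (M * x (τ - 1))) :
    ∀ τ : ℕ, (τ : ℝ) - 1 ≥ Real.logb 2 (Real.logb 2 M) → x τ ≥ M / 2 := by
  intro τ hτ
  have hM₀ : 0 < M := by linarith
  have hlogM : 1 ≤ logb 2 M := by
    simpa using logb_le_logb_of_le one_lt_two zero_lt_two hM
  obtain ⟨n, rfl⟩ : ∃ n, τ = n + 1 := by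
    have : (1 : ℝ) ≤ τ := by linarith [logb_nonneg one_lt_two hlogM]
    exact Nat.exists_eq_add_of_le' (by exact_mod_cast this)
  have hstep (k : ℕ) : 1 + √(M * x k) ≤ x (k + 1) := by simpa using hrec (k + 1) le_add_self
  have hgrowth := rpow_one_sub_inv_two_pow_le hM₀ (y := fun k ↦ x (k + 1))
    (by linarith [hstep 0, sqrt_nonneg (M * x 0)]) (fun k ↦ by linarith [hstep (k + 1)]) n
  have hlogM_le : logb 2 M ≤ 2 ^ n := by
    rw [← rpow_natCast, ← logb_le_iff_le_rpow one_lt_two (by linarith)]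
    push_cast at hτ
    linarith
  exact (half_le_rpow_one_sub_inv hM₀ (by positivity) hlogM_le).trans hgrowth

/-- If `M ≥ 2`, `x 0 ≥ 0`, and `x τ ≥ 1 + √(M · x (τ-1))` for all `τ ≥ 1`, then
`x τ ≥ M / 2` whenever `τ - 1 ≥ log₂ (log₂ M)`. -/
theorem stmt_2 (M : ℝ) (hM : 2 ≤ M) (x : ℕ → ℝ) (hx0 : 0 ≤ x 0)
    (hrec : ∀ τ : ℕ, 1 ≤ τ → x τ ≥ 1 + Real.sqrt (M * x (τ - 1))) :
    ∀ τ : ℕ, (τ : ℝ) - 1 ≥ Real.logb 2 (Real.logb 2 M) → x τ ≥ M / 2 :=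
  stmt_2_general M hM x hrec
end

section
/- Let d, m, T be positive integers with (T·m)/d ≥ 4 (as a real number). Suppose that for each i ∈ {1,…,d} there is an integer K_i ≥ 1 and nonnegative reals c_{i,1}, …, c_{i,K_i} (epoch lengths) such that, setting c_{i,0} = 0, for every 1 ≤ τ ≤ K_i − 1 one has c_{i,τ} ≥ 1 + √((T·m/d) · c_{i,τ−1}), and such that the total length satisfies Σ_{i=1}^{d} Σ_{τ=1}^{K_i} c_{i,τ} ≤ m·T. Then Σ_{i=1}^{d} K_i ≤ d · (log₂(log₂(T·m/d)) + 4). -/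
/-!
Squaring the recursion gives `c (k+1)^2 ≥ M · c k`, hence `c (n+1)^(2^n) ≥ M^(2^n - 1)`: epoch lengths
approach `M` doubly exponentially fast. Once `2^(2^n) ≥ M`, i.e. after about `log₂ log₂ M` epochs,
every further non-final epoch has length at least `M/2`. With `M = Tm/d` the total budget `mT = dM`
pays for at most `2d` such epochs over all arms.
-/

open Finset Real

section SqrtRecursion

variable {M : ℝ} {c : ℕ → ℝ} {K : ℕ}

theorem pow_two_pow_le_mul_pow_two_pow_of_sqrt_rec (hM : 0 ≤ M) (hc0 : c 0 = 0)
    (hrec : ∀ k, k + 1 < K → 1 + √(M * c k) ≤ c (k + 1)) (n : ℕ) (hn : n + 1 < K) :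
    M ^ 2 ^ n ≤ M * c (n + 1) ^ 2 ^ n := by
  induction n with
  | zero =>
    have h1 := hrec 0 hn
    simp only [hc0, mul_zero, sqrt_zero, add_zero] at h1
    simpa using mul_le_mul_of_nonneg_left h1 hM
  | succ n ih =>
    have hprev_nonneg : 0 ≤ c (n + 1) :=
      le_trans (by positivity) (hrec n (by omega))
    have hsq : M * c (n + 1) ≤ c (n + 2) ^ 2 :=
      (sqrt_le_iff.mp (by linarith [hrec (n + 1) hn, sqrt_nonneg (M * c (n + 1))])).2
    calc M ^ 2 ^ (n + 1) = M ^ 2 ^ n * M ^ 2 ^ n := by rw [pow_succ, pow_mul, sq]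
      _ ≤ M ^ 2 ^ n * (M * c (n + 1) ^ 2 ^ n) := by gcongr; exact ih (by omega)
      _ = M * (M * c (n + 1)) ^ 2 ^ n := by ring
      _ ≤ M * (c (n + 2) ^ 2) ^ 2 ^ n := by gcongr
      _ = M * c (n + 1 + 1) ^ 2 ^ (n + 1) := by rw [← pow_mul, ← pow_succ']

theorem half_le_of_le_two_pow_two_pow {x : ℝ} {n : ℕ} (hM : 0 < M) (hx : 0 ≤ x)
    (hMn : M ≤ 2 ^ 2 ^ n) (h : M ^ 2 ^ n ≤ M * x ^ 2 ^ n) : M / 2 ≤ x := by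
  refine le_of_pow_le_pow_left₀ (n := 2 ^ n) (by positivity) hx
    (le_of_mul_le_mul_left ?_ hM)
  calc M * (M / 2) ^ 2 ^ n = M ^ 2 ^ n * (M / 2 ^ 2 ^ n) := by rw [div_pow]; ring
    _ ≤ M ^ 2 ^ n * 1 := by gcongr; exact div_le_one_of_le₀ hMn (by positivity)
    _ ≤ M * x ^ 2 ^ n := by rwa [mul_one]

theorem half_le_of_sqrt_rec {n : ℕ} (hM : 0 < M) (hMn : M ≤ 2 ^ 2 ^ n) (hc0 : c 0 = 0)
    (hrec : ∀ k, k + 1 < K → 1 + √(M * c k) ≤ c (k + 1)) {k : ℕ} (hnk : n ≤ k)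
    (hkK : k + 1 < K) : M / 2 ≤ c (k + 1) := by
  refine half_le_of_le_two_pow_two_pow hM ?_ ?_
    (pow_two_pow_le_mul_pow_two_pow_of_sqrt_rec hM.le hc0 hrec k hkK)
  · exact le_trans (by positivity) (hrec k hkK)
  · exact hMn.trans (pow_le_pow_right₀ one_le_two (Nat.pow_le_pow_right two_pos hnk))

theorem le_add_two_div_mul_sum_of_sqrt_rec {n : ℕ} (hM : 0 < M) (hMn : M ≤ 2 ^ 2 ^ n)
    (hc0 : c 0 = 0) (hcnn : ∀ τ, 1 ≤ τ → τ ≤ K → 0 ≤ c τ)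
    (hrec : ∀ k, k + 1 < K → 1 + √(M * c k) ≤ c (k + 1)) :
    (K : ℝ) ≤ n + 1 + 2 / M * ∑ τ ∈ Icc 1 K, c τ := by
  have hlong : ((K - (n + 1) : ℕ) : ℝ) * (M / 2) ≤ ∑ τ ∈ Ico (n + 1) K, c τ := by
    have := card_nsmul_le_sum (Ico (n + 1) K) c (M / 2) fun τ hτ => by
      obtain ⟨k, rfl⟩ : ∃ k, τ = k + 1 := ⟨τ - 1, by grind⟩
      grind [half_le_of_sqrt_rec hM hMn hc0 hrec (k := k)]
    simpa [nsmul_eq_mul] using this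
  have hsub : ∑ τ ∈ Ico (n + 1) K, c τ ≤ ∑ τ ∈ Icc 1 K, c τ :=
    sum_le_sum_of_subset_of_nonneg (fun τ => by grind) fun τ hτ _ => by grind
  have hsplit : (K : ℝ) ≤ n + 1 + ((K - (n + 1) : ℕ) : ℝ) := by norm_cast; omega
  have hcount : ((K - (n + 1) : ℕ) : ℝ) ≤ 2 / M * ∑ τ ∈ Icc 1 K, c τ := by
    rw [div_mul_eq_mul_div, le_div_iff₀ hM]; linarith
  linarith

end SqrtRecursion

theorem exists_le_two_pow_two_pow {M : ℝ} (hM : 2 ≤ M) :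
    ∃ n : ℕ, M ≤ 2 ^ 2 ^ n ∧ (n : ℝ) < logb 2 (logb 2 M) + 1 := by
  have hlog : 1 ≤ logb 2 M := by
    rw [le_logb_iff_rpow_le one_lt_two (by linarith)]; simpa using hM
  refine ⟨⌈logb 2 (logb 2 M)⌉₊, ?_, Nat.ceil_lt_add_one ?_⟩
  · have h := (logb_le_iff_le_rpow one_lt_two (by linarith)).mp (Nat.le_ceil _)
    have h' := (logb_le_iff_le_rpow one_lt_two (by linarith)).mp h
    rwa [rpow_natCast, ← Nat.cast_ofNat, ← Nat.cast_pow, rpow_natCast, Nat.cast_ofNat] at h'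
  · exact logb_nonneg one_lt_two hlog

theorem stmt_3_general (d m T : ℕ)
    (h4 : (4 : ℝ) ≤ (T : ℝ) * m / d)
    (K : Fin d → ℕ)
    (c : Fin d → ℕ → ℝ)
    (hc0 : ∀ i, c i 0 = 0)
    (hcnn : ∀ i, ∀ τ : ℕ, 1 ≤ τ → τ ≤ K i → 0 ≤ c i τ)
    (hrec : ∀ i, ∀ τ : ℕ, 1 ≤ τ → τ ≤ K i - 1 →
      c i τ ≥ 1 + Real.sqrt (((T : ℝ) * m / d) * c i (τ - 1)))
    (htot : ∑ i, ∑ τ ∈ Finset.Icc 1 (K i), c i τ ≤ (m : ℝ) * T) :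
    (∑ i, (K i : ℝ)) ≤ (d : ℝ) * (Real.logb 2 (Real.logb 2 ((T : ℝ) * m / d)) + 4) := by
  set M : ℝ := (T : ℝ) * m / d
  have hM : 0 < M := by linarith
  have hmT : (m : ℝ) * T = d * M := by
    have hd : (d : ℝ) ≠ 0 := fun hd => by simp [M, hd] at hM
    simp only [M]; field_simp
  obtain ⟨n, hMn, hn⟩ := exists_le_two_pow_two_pow (M := M) (by linarith)
  have hK i : (K i : ℝ) ≤ n + 1 + 2 / M * ∑ τ ∈ Icc 1 (K i), c i τ :=
    le_add_two_div_mul_sum_of_sqrt_rec hM hMn (hc0 i) (hcnn i)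
      fun k hk => hrec i (k + 1) (by omega) (by omega)
  calc ∑ i, (K i : ℝ) ≤ ∑ i, (n + 1 + 2 / M * ∑ τ ∈ Icc 1 (K i), c i τ) :=
        sum_le_sum fun i _ => hK i
    _ = d * (n + 1) + 2 / M * ∑ i, ∑ τ ∈ Icc 1 (K i), c i τ := by
      rw [sum_add_distrib, ← mul_sum, sum_const, card_univ, Fintype.card_fin, nsmul_eq_mul]
    _ ≤ d * (n + 1) + 2 / M * (m * T) := by gcongr
    _ = d * (n + 3) := by rw [hmT]; field_simp; ring
    _ ≤ d * (logb 2 (logb 2 M) + 4) := mul_le_mul_of_nonneg_left (by linarith) d.cast_nonneg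

/-- Oracle-query bound for the adaptive framework (AROQ-CMAB): if for each base arm
`i` the epoch lengths `c i 1, …, c i (K i)` are nonnegative, satisfy (with `c i 0 = 0`)
the threshold recursion `c i τ ≥ 1 + √((Tm/d) · c i (τ-1))` for `1 ≤ τ ≤ K i - 1`,
and the total length is at most `m·T`, then the total number of epochs satisfies
`∑ i, K i ≤ d · (log₂ (log₂ (Tm/d)) + 4)`, provided `Tm/d ≥ 4`. -/
theorem stmt_3 (d m T : ℕ) (hd : 0 < d) (hm : 0 < m) (hT : 0 < T)
    (h4 : (4 : ℝ) ≤ (T : ℝ) * m / d)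
    (K : Fin d → ℕ) (hK : ∀ i, 1 ≤ K i)
    (c : Fin d → ℕ → ℝ)
    (hc0 : ∀ i, c i 0 = 0)
    (hcnn : ∀ i, ∀ τ : ℕ, 1 ≤ τ → τ ≤ K i → 0 ≤ c i τ)
    (hrec : ∀ i, ∀ τ : ℕ, 1 ≤ τ → τ ≤ K i - 1 →
      c i τ ≥ 1 + Real.sqrt (((T : ℝ) * m / d) * c i (τ - 1)))
    (htot : ∑ i, ∑ τ ∈ Finset.Icc 1 (K i), c i τ ≤ (m : ℝ) * T) :
    (∑ i, (K i : ℝ)) ≤ (d : ℝ) * (Real.logb 2 (Real.logb 2 ((T : ℝ) * m / d)) + 4) :=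
  stmt_3_general d m T h4 K c hc0 hcnn hrec htot
end

section
/- Let T > 1 be a real number, M ≥ 2 an integer, η = T^(1/(2 − 2^(1−M))) (real exponentiation), and define t_0 = 1 and t_τ = η · √(t_{τ−1}) for τ ≥ 1. Then Σ_{τ=1}^{M−1} (t_{τ+1} − t_τ)/√(t_τ − t_{τ−1}) ≤ η · √((M−1) · T). -/
/-!
Unrolling the recursion gives `t τ = η ^ (2 - 2 ^ (1 - τ))`, so `t` increases from `t 0 = 1` and the
choice of `η` makes `t M = T`. As `t (τ + 1) - t τ = η (√(t τ) - √(t (τ - 1)))` and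
`√a - √b ≤ a - b` for `a ≥ b ≥ 1/4`, each summand is at most `η √(t τ - t (τ - 1))`. Cauchy–Schwarz
bounds the sum of these roots by `√((M - 1) (t (M - 1) - 1))`, the inner sum telescoping.
-/

open Finset Real

lemma Real.sqrt_sub_sqrt_le_sub {a b : ℝ} (hb : 1 / 4 ≤ b) (hba : b ≤ a) : √a - √b ≤ a - b := by
  have hsa : 1 / 2 ≤ √a := le_sqrt_of_sq_le (by linarith)
  have hsb : 1 / 2 ≤ √b := le_sqrt_of_sq_le (by linarith)
  have hsab : √b ≤ √a := sqrt_le_sqrt hba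
  have hdiff : a - b = (√a + √b) * (√a - √b) := by
    rw [← sq_sub_sq, sq_sqrt (by linarith), sq_sqrt (by linarith)]
  rw [hdiff]
  nlinarith

lemma Real.sum_sqrt_le_sqrt_card_mul_sum {ι : Type*} (s : Finset ι) {d : ι → ℝ}
    (hd : ∀ i ∈ s, 0 ≤ d i) : ∑ i ∈ s, √(d i) ≤ √(#s * ∑ i ∈ s, d i) := by
  have hcs := sum_mul_le_sqrt_mul_sqrt s (fun _ ↦ (1 : ℝ)) (fun i ↦ √(d i))
  simp only [one_mul, one_pow, sum_const, nsmul_eq_mul, mul_one] at hcs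
  rwa [sum_congr rfl fun i hi ↦ sq_sqrt (hd i hi), ← sqrt_mul (Nat.cast_nonneg _)] at hcs

lemma sum_div_sqrt_le_mul_sqrt_card_mul_sum {ι : Type*} (s : Finset ι) {a d : ι → ℝ} {η : ℝ}
    (hη : 0 ≤ η) (hd : ∀ i ∈ s, 0 < d i) (had : ∀ i ∈ s, a i ≤ η * d i) :
    ∑ i ∈ s, a i / √(d i) ≤ η * √(#s * ∑ i ∈ s, d i) :=
  calc ∑ i ∈ s, a i / √(d i)
      ≤ ∑ i ∈ s, η * d i / √(d i) := sum_le_sum fun i hi ↦ by gcongr; exact had i hi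
    _ = ∑ i ∈ s, η * √(d i) := by simp only [mul_div_assoc, div_sqrt]
    _ = η * ∑ i ∈ s, √(d i) := (mul_sum ..).symm
    _ ≤ η * √(#s * ∑ i ∈ s, d i) :=
        mul_le_mul_of_nonneg_left (sum_sqrt_le_sqrt_card_mul_sum s fun i hi ↦ (hd i hi).le) hη

lemma Finset.sum_Icc_one_sub_pred {G : Type*} [AddCommGroup G] (f : ℕ → G) (n : ℕ) :
    ∑ i ∈ Icc 1 n, (f i - f (i - 1)) = f n - f 0 := by
  induction n with
  | zero => simp
  | succ n ih => rw [sum_Icc_succ_top (by omega), ih, Nat.add_sub_cancel]; abel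

section SqrtRecursion

variable {η : ℝ} {t : ℕ → ℝ}

lemma eq_rpow_of_sqrt_rec (hη : 0 < η) (h0 : t 0 = 1) (hrec : ∀ n, t (n + 1) = η * √(t n))
    (n : ℕ) : t n = η ^ (2 - (2 : ℝ) ^ (1 - (n : ℝ))) := by
  induction n with
  | zero => simp [h0]
  | succ n ih =>
    have hhalf : (2 : ℝ) ^ (1 - ((n : ℝ) + 1)) = (2 : ℝ) ^ (1 - (n : ℝ)) / 2 := by
      rw [show 1 - ((n : ℝ) + 1) = (1 - n) - 1 by ring, rpow_sub two_pos, rpow_one]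
    rw [hrec, ih, sqrt_eq_rpow, ← rpow_mul hη.le, mul_comm η, ← rpow_add_one hη.ne']
    push_cast
    rw [hhalf]
    ring_nf

lemma strictMono_of_sqrt_rec (hη : 1 < η) (h0 : t 0 = 1) (hrec : ∀ n, t (n + 1) = η * √(t n)) :
    StrictMono t := by
  refine strictMono_nat_of_lt_succ fun n ↦ ?_
  rw [eq_rpow_of_sqrt_rec (by linarith) h0 hrec, eq_rpow_of_sqrt_rec (by linarith) h0 hrec]
  refine rpow_lt_rpow_of_exponent_lt hη (sub_lt_sub_left ?_ 2)
  exact rpow_lt_rpow_of_exponent_lt one_lt_two (by push_cast; linarith)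

lemma sub_le_mul_sub_of_sqrt_rec (hη : 0 ≤ η) (hrec : ∀ n, t (n + 1) = η * √(t n)) {n : ℕ}
    (hn : 1 / 4 ≤ t n) (hmono : t n ≤ t (n + 1)) :
    t (n + 2) - t (n + 1) ≤ η * (t (n + 1) - t n) := by
  rw [hrec (n + 1), hrec n, ← mul_sub, ← hrec n]
  exact mul_le_mul_of_nonneg_left (sqrt_sub_sqrt_le_sub hn hmono) hη

end SqrtRecursion

/-- Deterministic core of the SROQ-CMAB regret bound: with `T > 1`, `M ≥ 2`,
`η = T^(1/(2 - 2^(1-M)))`, `t 0 = 1` and `t τ = η · √(t (τ-1))`, one has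
`∑_{τ=1}^{M-1} (t (τ+1) - t τ)/√(t τ - t (τ-1)) ≤ η · √((M-1) · T)`. -/
theorem stmt_8 (T : ℝ) (hT : 1 < T) (M : ℕ) (hM : 2 ≤ M)
    (η : ℝ) (hη : η = T ^ ((1 : ℝ) / (2 - (2 : ℝ) ^ ((1 : ℝ) - (M : ℝ)))))
    (t : ℕ → ℝ) (ht0 : t 0 = 1)
    (htrec : ∀ τ : ℕ, 1 ≤ τ → t τ = η * Real.sqrt (t (τ - 1))) :
    ∑ τ ∈ Finset.Icc 1 (M - 1), (t (τ + 1) - t τ) / Real.sqrt (t τ - t (τ - 1)) ≤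
      η * Real.sqrt (((M : ℝ) - 1) * T) := by
  have hM2 : (2 : ℝ) ≤ M := by exact_mod_cast hM
  have hexp : 0 < 2 - (2 : ℝ) ^ (1 - (M : ℝ)) := by
    linarith [rpow_le_one_of_one_le_of_nonpos one_le_two (by linarith : 1 - (M : ℝ) ≤ 0)]
  have hη1 : 1 < η := hη ▸ one_lt_rpow hT (by positivity)
  have hη0 : 0 ≤ η := by linarith
  have hrec : ∀ n, t (n + 1) = η * √(t n) := fun n ↦ htrec (n + 1) (by omega)
  have hmono := strictMono_of_sqrt_rec hη1 ht0 hrec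
  have htM : t M = T := by
    rw [eq_rpow_of_sqrt_rec (zero_lt_one.trans hη1) ht0 hrec, hη, ← rpow_mul (by linarith),
      one_div_mul_cancel hexp.ne', rpow_one]
  refine (sum_div_sqrt_le_mul_sqrt_card_mul_sum _ hη0 (fun τ hτ ↦ ?_) fun τ hτ ↦ ?_).trans ?_
  · exact sub_pos.2 (hmono (by have := (mem_Icc.1 hτ).1; omega))
  · obtain ⟨n, rfl⟩ : ∃ n, τ = n + 1 := ⟨τ - 1, by have := (mem_Icc.1 hτ).1; omega⟩
    have hn : 1 ≤ t n := ht0 ▸ hmono.monotone (Nat.zero_le n)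
    exact sub_le_mul_sub_of_sqrt_rec hη0 hrec (by linarith) (hmono.monotone n.le_succ)
  · have htM1 : t (M - 1) ≤ T := htM ▸ hmono.monotone (Nat.sub_le M 1)
    rw [sum_Icc_one_sub_pred, ht0, Nat.card_Icc, Nat.add_sub_cancel, Nat.cast_sub (by omega),
      Nat.cast_one]
    gcongr <;> linarith
end

section
/- Let d be a positive integer, S a finite subset of Fin d, Σ : Fin d → Fin d → ℝ, n : Fin d → ℝ with n i > 0 for all i, and N : Fin d → Fin d → ℝ with 0 ≤ N i j ≤ n j for all i, j. Then Σ_{i∈S} Σ_{j∈S} (N i j · Σ i j)/(n i · n j) ≤ Σ_{i∈S} (Σ_{j∈S} max(Σ i j, 0)) / n i. -/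
lemma mul_le_mul_max_zero {N m c : ℝ} (hN : 0 ≤ N) (hNm : N ≤ m) :
    N * c ≤ m * max c 0 :=
  calc N * c ≤ N * max c 0 := mul_le_mul_of_nonneg_left (le_max_left c 0) hN
    _ ≤ m * max c 0 := mul_le_mul_of_nonneg_right hNm (le_max_right c 0)

lemma mul_div_mul_le_max_zero_div {N m a c : ℝ} (ha : 0 ≤ a) (hN : 0 ≤ N) (hNm : N ≤ m) :
    N * c / (a * m) ≤ max c 0 / a := by
  have hm : 0 ≤ m := hN.trans hNm
  calc N * c / (a * m) ≤ m * max c 0 / (a * m) :=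
        div_le_div_of_nonneg_right (mul_le_mul_max_zero hN hNm) (mul_nonneg ha hm)
    _ = max c 0 / a * (m / m) := by ring
    _ ≤ max c 0 / a :=
        mul_le_of_le_one_right (div_nonneg (le_max_right c 0) ha) (div_self_le_one m)

theorem stmt_9_general (d : ℕ) (S : Finset (Fin d))
    (Cov : Fin d → Fin d → ℝ) (n : Fin d → ℝ) (hn : ∀ i, 0 < n i)
    (N : Fin d → Fin d → ℝ) (hN0 : ∀ i j, 0 ≤ N i j) (hNn : ∀ i j, N i j ≤ n j) :
    ∑ i ∈ S, ∑ j ∈ S, N i j * Cov i j / (n i * n j) ≤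
      ∑ i ∈ S, (∑ j ∈ S, max (Cov i j) 0) / n i := by
  refine Finset.sum_le_sum fun i _ => ?_
  rw [Finset.sum_div]
  exact Finset.sum_le_sum fun j _ =>
    mul_div_mul_le_max_zero_div (hn i).le (hN0 i j) (hNn i j)

/-- Covariance double-sum bound: for pull counts `n i > 0` and joint pull counts
`0 ≤ N i j ≤ n j`, one has
`∑_{i∈S} ∑_{j∈S} (N i j · Σ i j)/(n i · n j) ≤ ∑_{i∈S} (∑_{j∈S} (Σ i j)₊)/n i`. -/
theorem stmt_9 (d : ℕ) (hd : 0 < d) (S : Finset (Fin d))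
    (Cov : Fin d → Fin d → ℝ) (n : Fin d → ℝ) (hn : ∀ i, 0 < n i)
    (N : Fin d → Fin d → ℝ) (hN0 : ∀ i j, 0 ≤ N i j) (hNn : ∀ i j, N i j ≤ n j) :
    ∑ i ∈ S, ∑ j ∈ S, N i j * Cov i j / (n i * n j) ≤
      ∑ i ∈ S, (∑ j ∈ S, max (Cov i j) 0) / n i :=
  stmt_9_general d S Cov n hn N hN0 hNn
end

section
/- Let d be a positive integer, 𝒜₀ a nonempty finite set of finite subsets of Fin d (actions), r̄ : Finset (Fin d) → ℝ, and a* ∈ 𝒜₀ with r̄ a* ≥ r̄ a for all a ∈ 𝒜₀. Let M ≥ 1 be an integer and for each epoch τ ∈ {1,…,M} let U_τ, L_τ : Finset (Fin d) → ℝ satisfy L_τ a ≤ r̄ a ≤ U_τ a for all a ∈ 𝒜₀. Define recursively 𝒜_τ = { a ∈ 𝒜_{τ−1} : for every i ∈ a, max over {b ∈ 𝒜_{τ−1} : i ∈ b} of U_τ ≥ max over 𝒜_{τ−1} of L_τ }. Then a* ∈ 𝒜_τ for every τ ∈ {0,1,…,M}. -/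
/-! Every lower bound of a surviving action is at most its mean reward, hence at most
`r̄ a* ≤ U_τ a*`; since `a*` itself contains each of its base arms `i` and survives,
`U_τ a*` is a candidate in the maximum over actions containing `i`, so `a*` passes the
elimination test at every epoch. -/

open Finset

theorem Finset.sup'_le_sup'_filter_of_optimal {α β : Type*} [LinearOrder β]
    {S B : Finset α} {r l u : α → β} {a : α} {p : α → Prop} [DecidablePred p]
    (ha : a ∈ B) (hpa : p a) (hBS : B ⊆ S) (hopt : ∀ b ∈ S, r b ≤ r a)
    (hl : ∀ b ∈ S, l b ≤ r b) (hu : r a ≤ u a) :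
    B.sup' ⟨a, ha⟩ l ≤ (B.filter p).sup' ⟨a, mem_filter.2 ⟨ha, hpa⟩⟩ u := by
  refine sup'_le _ _ fun b hb => ?_
  calc l b ≤ r b := hl b (hBS hb)
    _ ≤ r a := hopt b (hBS hb)
    _ ≤ u a := hu
    _ ≤ _ := le_sup' u (mem_filter.2 ⟨ha, hpa⟩)

theorem stmt_12_general (d : ℕ)
    (𝒜₀ : Finset (Finset (Fin d)))
    (rbar : Finset (Fin d) → ℝ)
    (astar : Finset (Fin d)) (hstar : astar ∈ 𝒜₀)
    (hopt : ∀ a ∈ 𝒜₀, rbar a ≤ rbar astar)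
    (M : ℕ)
    (U L : ℕ → Finset (Fin d) → ℝ)
    (hconf : ∀ τ : ℕ, 1 ≤ τ → τ ≤ M → ∀ a ∈ 𝒜₀, L τ a ≤ rbar a ∧ rbar a ≤ U τ a)
    (A : ℕ → Finset (Finset (Fin d)))
    (hA0 : A 0 = 𝒜₀)
    (hArec : ∀ τ : ℕ, 1 ≤ τ → τ ≤ M → ∀ a : Finset (Fin d),
      a ∈ A τ ↔ a ∈ A (τ - 1) ∧ ∀ i ∈ a,
        ∃ (h1 : (A (τ - 1)).Nonempty)
          (h2 : ((A (τ - 1)).filter (fun b => i ∈ b)).Nonempty),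
          (A (τ - 1)).sup' h1 (L τ) ≤
            ((A (τ - 1)).filter (fun b => i ∈ b)).sup' h2 (U τ)) :
    ∀ τ : ℕ, τ ≤ M → astar ∈ A τ := by
  intro τ hτ
  suffices astar ∈ A τ ∧ A τ ⊆ 𝒜₀ from this.1
  induction τ with
  | zero => rw [hA0]; exact ⟨hstar, subset_rfl⟩
  | succ n ih =>
    obtain ⟨hmem, hsub⟩ := ih (by omega)
    have hrec := hArec (n + 1) (by omega) hτ
    have hconf' := hconf (n + 1) (by omega) hτ
    simp only [Nat.add_sub_cancel] at hrec
    refine ⟨(hrec astar).2 ⟨hmem, fun i hi =>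
      ⟨⟨astar, hmem⟩, ⟨astar, mem_filter.2 ⟨hmem, hi⟩⟩, ?_⟩⟩, fun a ha => hsub ((hrec a).1 ha).1⟩
    exact sup'_le_sup'_filter_of_optimal hmem hi hsub hopt (fun b hb => (hconf' b hb).1)
      (hconf' astar hstar).2

/-- The optimal action survives every elimination epoch: with valid confidence bounds
`L τ a ≤ r̄ a ≤ U τ a` at each epoch `τ ∈ {1,…,M}`, and surviving sets
`A τ = { a ∈ A (τ-1) : ∀ i ∈ a, max_{b ∈ A (τ-1), i ∈ b} U τ b ≥ max_{a' ∈ A (τ-1)} L τ a' }`,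
one has `a* ∈ A τ` for all `0 ≤ τ ≤ M`. -/
theorem stmt_12 (d : ℕ) (hd : 0 < d)
    (𝒜₀ : Finset (Finset (Fin d))) (h𝒜₀ : 𝒜₀.Nonempty)
    (rbar : Finset (Fin d) → ℝ)
    (astar : Finset (Fin d)) (hstar : astar ∈ 𝒜₀)
    (hopt : ∀ a ∈ 𝒜₀, rbar a ≤ rbar astar)
    (M : ℕ) (hM : 1 ≤ M)
    (U L : ℕ → Finset (Fin d) → ℝ)
    (hconf : ∀ τ : ℕ, 1 ≤ τ → τ ≤ M → ∀ a ∈ 𝒜₀, L τ a ≤ rbar a ∧ rbar a ≤ U τ a)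
    (A : ℕ → Finset (Finset (Fin d)))
    (hA0 : A 0 = 𝒜₀)
    (hArec : ∀ τ : ℕ, 1 ≤ τ → τ ≤ M → ∀ a : Finset (Fin d),
      a ∈ A τ ↔ a ∈ A (τ - 1) ∧ ∀ i ∈ a,
        ∃ (h1 : (A (τ - 1)).Nonempty)
          (h2 : ((A (τ - 1)).filter (fun b => i ∈ b)).Nonempty),
          (A (τ - 1)).sup' h1 (L τ) ≤
            ((A (τ - 1)).filter (fun b => i ∈ b)).sup' h2 (U τ)) :
    ∀ τ : ℕ, τ ≤ M → astar ∈ A τ :=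
  stmt_12_general d 𝒜₀ rbar astar hstar hopt M U L hconf A hA0 hArec
end

section
/- Let d be a positive integer and L ≥ 0. For each i ∈ Fin d, let P_i and P'_i be probability measures on ℝ, each supported on a finite subset of the interval [0,1], and let P = ⨂_i P_i and P' = ⨂_i P'_i be the corresponding product probability measures on (Fin d → ℝ). Let S be a finite subset of Fin d and let z : Fin d → ℝ with z i > 0. Suppose that for every i ∈ S and every x ∈ [0,1), P_i((-∞, x]) − P'_i((-∞, x]) ≤ z i. Then for every measurable function f : (Fin d → ℝ) → ℝ that is monotone with respect to the pointwise order, takes values in [0, L], and depends only on the coordinates in S (f y = f y' whenever y and y' agree on S), one has ∫ f dP' − ∫ f dP ≤ 2 · L · Σ_{i∈S} z i. -/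
/-!
Replace the factors `P i` by `P' i` one coordinate at a time. By Fubini, swapping coordinate `i`
changes `∫ f` by `∫ G ∂P' i - ∫ G ∂P i`, where `G` integrates `f` over the other coordinates; `G`
is again monotone with values in `[0, L]`, and it is constant when `i ∉ S`. The layer-cake formula
writes `∫ G ∂P' i - ∫ G ∂P i` as the integral over `t ∈ (0, L]` of `P' i U - P i U` for the upper
sets `U = {G ≥ t}`. For an upper set `U ∋ 1`, the complement of `U` carries the same `P i`-mass as
`(-∞, u]`, where `u < 1` is the largest point of the finite support of `P i` outside `U`, and at
least as much `P' i`-mass, so the gap is at most the CDF gap `z i`; an upper set `U ∌ 1` is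
`P' i`-null. Summing gives the bound
`L ∑_{i ∈ S} z i`.
-/

open MeasureTheory Set

theorem measureReal_sub_measureReal_le_of_isUpperSet {μ μ' : Measure ℝ}
    [IsProbabilityMeasure μ] [IsProbabilityMeasure μ'] {s : Finset ℝ} (hs : ↑s ⊆ Ici (0 : ℝ))
    (hμs : μ (↑s)ᶜ = 0) (hμ' : μ' (Ioi 1) = 0) {z : ℝ} (hz : 0 ≤ z)
    (hcdf : ∀ x ∈ Ico (0 : ℝ) 1, μ.real (Iic x) - μ'.real (Iic x) ≤ z)
    {A : Set ℝ} (hA : MeasurableSet A) (hup : IsUpperSet A) :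
    μ'.real A - μ.real A ≤ z := by
  classical
  by_cases h1 : (1 : ℝ) ∈ A
  swap
  · have hA1 : A ⊆ Ioi 1 := fun x hx => not_le.1 fun hx1 => h1 (hup hx1 hx)
    have : μ'.real A = 0 := (measureReal_eq_zero_iff).2 (measure_mono_null hA1 hμ')
    linarith [measureReal_nonneg (μ := μ) (s := A)]
  rw [← sub_sub_sub_cancel_left _ _ 1, ← probReal_compl_eq_one_sub hA,
    ← probReal_compl_eq_one_sub hA]
  set F := s.filter (· ∉ A)
  have hAcF : Aᶜ \ ↑F ⊆ (↑s)ᶜ := fun x ⟨hxA, hxF⟩ hxs => hxF (Finset.mem_filter.2 ⟨hxs, hxA⟩)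
  by_cases hF : F.Nonempty
  · set u := F.max' hF
    obtain ⟨hus, huA⟩ := Finset.mem_filter.1 (F.max'_mem hF)
    have hAc : μ.real Aᶜ ≤ μ.real (Iic u) := by
      refine ENNReal.toReal_mono (measure_ne_top _ _)
        (measure_mono_ae (ae_le_set.2 (measure_mono_null (fun x hx => ?_) hμs)))
      exact hAcF ⟨hx.1, fun hxF => hx.2 (F.le_max' x hxF)⟩
    have hIic : μ'.real (Iic u) ≤ μ'.real Aᶜ := measureReal_mono (hup.compl.Iic_subset huA)
    have hu1 : u < 1 := not_le.1 fun h => huA (hup h h1)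
    linarith [hcdf u ⟨hs hus, hu1⟩]
  · have : μ.real Aᶜ = 0 := by
      refine (measureReal_eq_zero_iff).2 (measure_mono_null (fun x hx => hAcF ⟨hx, ?_⟩) hμs)
      simp [Finset.not_nonempty_iff_eq_empty.1 hF]
    linarith [measureReal_nonneg (μ := μ') (s := Aᶜ)]

theorem integral_sub_integral_le_of_isUpperSet {α : Type*} [MeasurableSpace α] [Preorder α]
    {μ μ' : Measure α} [IsProbabilityMeasure μ] [IsProbabilityMeasure μ'] {z L : ℝ}
    (hupper : ∀ A, MeasurableSet A → IsUpperSet A → μ'.real A - μ.real A ≤ z)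
    {g : α → ℝ} (hg : Measurable g) (hmono : Monotone g) (hrange : ∀ x, g x ∈ Icc 0 L) :
    ∫ x, g x ∂μ' - ∫ x, g x ∂μ ≤ L * z := by
  have hL : 0 ≤ L := by
    obtain ⟨x⟩ := nonempty_of_isProbabilityMeasure μ
    exact (hrange x).1.trans (hrange x).2
  have layercake (ν : Measure α) [IsProbabilityMeasure ν] :
      ∫ x, g x ∂ν = ∫ t in Ioc 0 L, ν.real {x | t ≤ g x} :=
    Integrable.integral_eq_integral_Ioc_meas_le
      (Integrable.of_mem_Icc 0 L hg.aemeasurable (ae_of_all _ hrange))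
      (ae_of_all _ fun x => (hrange x).1) (ae_of_all _ fun x => (hrange x).2)
  have hint (ν : Measure α) [IsProbabilityMeasure ν] :
      IntegrableOn (fun t => ν.real {x | t ≤ g x}) (Ioc 0 L) := by
    refine IntegrableOn.mono_set ?_ Ioc_subset_Icc_self
    refine AntitoneOn.integrableOn_isCompact isCompact_Icc fun s _ t _ hst => ?_
    exact measureReal_mono fun x (hx : t ≤ g x) => hst.trans hx
  calc ∫ x, g x ∂μ' - ∫ x, g x ∂μ
      = ∫ t in Ioc 0 L, (μ'.real {x | t ≤ g x} - μ.real {x | t ≤ g x}) := by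
        rw [layercake, layercake, integral_sub (hint μ') (hint μ)]
    _ ≤ ∫ t in Ioc 0 L, z :=
        setIntegral_mono (hint μ' |>.sub (hint μ)) (integrableOn_const measure_Ioc_lt_top.ne)
          fun t => hupper _ (measurableSet_le measurable_const hg)
            ((isUpperSet_Ici t).preimage hmono)
    _ = L * z := by simp [hL]

section InsertNth

variable {n : ℕ} {X : Type*} [MeasurableSpace X]

theorem measurable_uncurry_insertNth (a : Fin (n + 1)) :
    Measurable fun p : X × (Fin n → X) => (a.insertNth p.1 p.2 : Fin (n + 1) → X) := by
  convert (MeasurableEquiv.piFinSuccAbove (fun _ => X) a).symm.measurable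
  simp [MeasurableEquiv.piFinSuccAbove_symm_apply, Fin.insertNthEquiv]

theorem integral_pi_eq_integral_integral_insertNth {E : Type*} [NormedAddCommGroup E]
    [NormedSpace ℝ E] (κ : Fin (n + 1) → Measure X) [∀ i, SigmaFinite (κ i)] (a : Fin (n + 1))
    {f : (Fin (n + 1) → X) → E} (hf : Integrable f (Measure.pi κ)) :
    ∫ y, f y ∂Measure.pi κ =
      ∫ x, ∫ y, f (a.insertNth x y) ∂Measure.pi (fun j => κ (a.succAbove j)) ∂κ a := by
  have he := (measurePreserving_piFinSuccAbove κ a).symm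
  have hsymm : ∀ p : X × (Fin n → X),
      (MeasurableEquiv.piFinSuccAbove (fun _ => X) a).symm p = a.insertNth p.1 p.2 := by
    simp [MeasurableEquiv.piFinSuccAbove_symm_apply, Fin.insertNthEquiv]
  rw [← he.integral_comp', integral_prod]
  · simp only [hsymm]
  · exact (he.integrable_comp_emb (MeasurableEquiv.measurableEmbedding _)).2 hf

variable {L : ℝ} {f : (Fin (n + 1) → X) → ℝ}

section FiberIntegral

variable (ρ : Measure (Fin n → X)) [IsProbabilityMeasure ρ] (a : Fin (n + 1))

theorem integrable_comp_insertNth (hf : Measurable f) (hrange : ∀ y, f y ∈ Icc 0 L) (x : X) :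
    Integrable (fun y => f (a.insertNth x y)) ρ :=
  Integrable.of_mem_Icc 0 L
    (hf.comp ((measurable_uncurry_insertNth a).comp measurable_prodMk_left)).aemeasurable
    (ae_of_all _ fun _ => hrange _)

theorem measurable_integral_insertNth (hf : Measurable f) :
    Measurable fun x => ∫ y, f (a.insertNth x y) ∂ρ :=
  (hf.comp (measurable_uncurry_insertNth a)).stronglyMeasurable.integral_prod_right'.measurable

theorem integral_insertNth_mem_Icc (hf : Measurable f) (hrange : ∀ y, f y ∈ Icc 0 L) (x : X) :
    ∫ y, f (a.insertNth x y) ∂ρ ∈ Icc 0 L :=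
  ⟨integral_nonneg fun y => (hrange _).1, by
    simpa using integral_mono (integrable_comp_insertNth ρ a hf hrange x) (integrable_const L)
      fun y => (hrange _).2⟩

theorem monotone_integral_insertNth [Preorder X] (hf : Measurable f)
    (hrange : ∀ y, f y ∈ Icc 0 L) (hmono : Monotone f) :
    Monotone fun x => ∫ y, f (a.insertNth x y) ∂ρ := fun x x' hxx' =>
  integral_mono (integrable_comp_insertNth ρ a hf hrange x)
    (integrable_comp_insertNth ρ a hf hrange x')
    fun y => hmono (Fin.insertNth_le_iff.2 ⟨by simpa using hxx', by simp⟩)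

end FiberIntegral

variable {κ κ' : Fin (n + 1) → Measure X} [∀ i, IsProbabilityMeasure (κ i)]
  [∀ i, IsProbabilityMeasure (κ' i)] {a : Fin (n + 1)}

theorem integral_pi_sub_le_of_eq_succAbove [Preorder X]
    (hκ : ∀ j, κ' (a.succAbove j) = κ (a.succAbove j)) {c : ℝ}
    (hcmp : ∀ g : X → ℝ, Measurable g → Monotone g → (∀ x, g x ∈ Icc 0 L) →
      ∫ x, g x ∂κ' a - ∫ x, g x ∂κ a ≤ c)
    (hf : Measurable f) (hmono : Monotone f) (hrange : ∀ y, f y ∈ Icc 0 L) :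
    ∫ y, f y ∂Measure.pi κ' - ∫ y, f y ∂Measure.pi κ ≤ c := by
  have hint (μ : Measure (Fin (n + 1) → X)) [IsProbabilityMeasure μ] : Integrable f μ :=
    Integrable.of_mem_Icc 0 L hf.aemeasurable (ae_of_all _ hrange)
  rw [integral_pi_eq_integral_integral_insertNth κ' a (hint _),
    integral_pi_eq_integral_integral_insertNth κ a (hint _), funext hκ]
  exact hcmp _ (measurable_integral_insertNth _ a hf)
    (monotone_integral_insertNth _ a hf hrange hmono) (integral_insertNth_mem_Icc _ a hf hrange)

theorem integral_pi_eq_of_eq_succAbove (hκ : ∀ j, κ' (a.succAbove j) = κ (a.succAbove j))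
    (hf : Integrable f (Measure.pi κ)) (hf' : Integrable f (Measure.pi κ'))
    (hdep : ∀ y y', (∀ i ≠ a, y i = y' i) → f y = f y') :
    ∫ y, f y ∂Measure.pi κ' = ∫ y, f y ∂Measure.pi κ := by
  obtain ⟨x₀⟩ := nonempty_of_isProbabilityMeasure (κ a)
  set ρ := Measure.pi fun j => κ (a.succAbove j)
  have hconst : (fun x => ∫ y, f (a.insertNth x y) ∂ρ) = fun _ => ∫ y, f (a.insertNth x₀ y) ∂ρ :=
    funext fun x => integral_congr_ae <| ae_of_all _ fun y => hdep _ _ fun i hi => by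
      obtain ⟨k, rfl⟩ := Fin.exists_succAbove_eq hi
      simp only [Fin.insertNth_apply_succAbove]
  rw [integral_pi_eq_integral_integral_insertNth κ' a hf', funext hκ,
    integral_pi_eq_integral_integral_insertNth κ a hf, hconst]
  simp

end InsertNth

theorem integral_pi_piecewise_sub_le {X : Type*} [MeasurableSpace X] [Preorder X] {d : ℕ}
    (P P' : Fin d → Measure X) [∀ i, IsProbabilityMeasure (P i)]
    [∀ i, IsProbabilityMeasure (P' i)] {S : Finset (Fin d)} {c : Fin d → ℝ} {L : ℝ}
    (hcmp : ∀ i ∈ S, ∀ g : X → ℝ, Measurable g → Monotone g → (∀ x, g x ∈ Icc 0 L) →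
      ∫ x, g x ∂P' i - ∫ x, g x ∂P i ≤ c i)
    {f : (Fin d → X) → ℝ} (hf : Measurable f) (hmono : Monotone f)
    (hrange : ∀ y, f y ∈ Icc 0 L) (hdep : ∀ y y', (∀ i ∈ S, y i = y' i) → f y = f y')
    (T : Finset (Fin d)) :
    ∫ y, f y ∂Measure.pi (T.piecewise P' P) - ∫ y, f y ∂Measure.pi P ≤ ∑ i ∈ T ∩ S, c i := by
  have (T : Finset (Fin d)) (i : Fin d) : IsProbabilityMeasure (T.piecewise P' P i) :=
    T.piecewise_cases P' P IsProbabilityMeasure inferInstance inferInstance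
  have hint (μ : Measure (Fin d → X)) [IsProbabilityMeasure μ] : Integrable f μ :=
    Integrable.of_mem_Icc 0 L hf.aemeasurable (ae_of_all _ hrange)
  induction T using Finset.induction_on with
  | empty => simp
  | @insert a T haT ih =>
    obtain ⟨n, rfl⟩ := Nat.exists_eq_add_one_of_ne_zero a.pos.ne'
    have hκ (j : Fin n) :
        (insert a T).piecewise P' P (a.succAbove j) = T.piecewise P' P (a.succAbove j) :=
      T.piecewise_insert_of_ne P' P (a.succAbove_ne j)
    by_cases haS : a ∈ S
    · have hstep := integral_pi_sub_le_of_eq_succAbove hκ (c := c a)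
        (by simpa [haT] using hcmp a haS) hf hmono hrange
      rw [Finset.insert_inter_of_mem haS, Finset.sum_insert (by simp [haT])]
      linarith
    · have hstep := integral_pi_eq_of_eq_succAbove hκ (hint _) (hint _)
        fun y y' h => hdep y y' fun i hi => h i (ne_of_mem_of_not_mem hi haS)
      rw [Finset.insert_inter_of_notMem haS]
      linarith

theorem stmt_17_general (d : ℕ) (L : ℝ)
    (P P' : Fin d → Measure ℝ)
    [∀ i, IsProbabilityMeasure (P i)] [∀ i, IsProbabilityMeasure (P' i)]
    (hsupp : ∀ i, ∃ s : Finset ℝ, ↑s ⊆ Set.Icc (0 : ℝ) 1 ∧ P i (↑s)ᶜ = 0)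
    (hsupp' : ∀ i, ∃ s : Finset ℝ, ↑s ⊆ Set.Icc (0 : ℝ) 1 ∧ P' i (↑s)ᶜ = 0)
    (S : Finset (Fin d)) (z : Fin d → ℝ) (hz : ∀ i, 0 < z i)
    (hcdf : ∀ i ∈ S, ∀ x ∈ Set.Ico (0 : ℝ) 1,
      (P i (Set.Iic x)).toReal - (P' i (Set.Iic x)).toReal ≤ z i)
    (f : (Fin d → ℝ) → ℝ) (hf : Measurable f)
    (hmono : Monotone f) (hrange : ∀ y, f y ∈ Set.Icc (0 : ℝ) L)
    (hdep : ∀ y y' : Fin d → ℝ, (∀ i ∈ S, y i = y' i) → f y = f y') :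
    (∫ y, f y ∂(Measure.pi P')) - ∫ y, f y ∂(Measure.pi P) ≤
      2 * L * ∑ i ∈ S, z i := by
  have hcmp (i : Fin d) (hi : i ∈ S) (g : ℝ → ℝ) (hg : Measurable g) (hgmono : Monotone g)
      (hgrange : ∀ x, g x ∈ Icc 0 L) : ∫ x, g x ∂P' i - ∫ x, g x ∂P i ≤ L * z i := by
    obtain ⟨s, hs, hPs⟩ := hsupp i
    obtain ⟨s', hs', hP's'⟩ := hsupp' i
    have hP'1 : P' i (Ioi 1) = 0 :=
      measure_mono_null (fun x hx hxs => (hs' hxs).2.not_gt hx) hP's'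
    exact integral_sub_integral_le_of_isUpperSet (fun _ hA hup =>
      measureReal_sub_measureReal_le_of_isUpperSet (hs.trans Icc_subset_Ici_self) hPs hP'1
        (hz i).le (hcdf i hi) hA hup) hg hgmono hgrange
  have hL : 0 ≤ L := (hrange 0).1.trans (hrange 0).2
  have hzS : 0 ≤ ∑ i ∈ S, z i := Finset.sum_nonneg fun i _ => (hz i).le
  calc _ ≤ ∑ i ∈ S, L * z i := by
        simpa using integral_pi_piecewise_sub_le P P' hcmp hf hmono hrange hdep Finset.univ
    _ ≤ 2 * L * ∑ i ∈ S, z i := by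
        rw [← Finset.mul_sum]
        linarith [mul_nonneg hL hzS]

/-- Distribution-comparison lemma (part (b)): if for each `i ∈ S` and each
`x ∈ [0,1)` the CDF of `P i` exceeds that of `P' i` by at most `z i`, then for any
monotone measurable `f` with values in `[0,L]` depending only on the coordinates
in `S`, `∫ f dP' − ∫ f dP ≤ 2 L ∑_{i∈S} z i`. -/
theorem stmt_17 (d : ℕ) (hd : 0 < d) (L : ℝ) (hL : 0 ≤ L)
    (P P' : Fin d → Measure ℝ)
    [∀ i, IsProbabilityMeasure (P i)] [∀ i, IsProbabilityMeasure (P' i)]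
    (hsupp : ∀ i, ∃ s : Finset ℝ, ↑s ⊆ Set.Icc (0 : ℝ) 1 ∧ P i (↑s)ᶜ = 0)
    (hsupp' : ∀ i, ∃ s : Finset ℝ, ↑s ⊆ Set.Icc (0 : ℝ) 1 ∧ P' i (↑s)ᶜ = 0)
    (S : Finset (Fin d)) (z : Fin d → ℝ) (hz : ∀ i, 0 < z i)
    (hcdf : ∀ i ∈ S, ∀ x ∈ Set.Ico (0 : ℝ) 1,
      (P i (Set.Iic x)).toReal - (P' i (Set.Iic x)).toReal ≤ z i)
    (f : (Fin d → ℝ) → ℝ) (hf : Measurable f)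
    (hmono : Monotone f) (hrange : ∀ y, f y ∈ Set.Icc (0 : ℝ) L)
    (hdep : ∀ y y' : Fin d → ℝ, (∀ i ∈ S, y i = y' i) → f y = f y') :
    (∫ y, f y ∂(Measure.pi P')) - ∫ y, f y ∂(Measure.pi P) ≤
      2 * L * ∑ i ∈ S, z i :=
  stmt_17_general d L P P' hsupp hsupp' S z hz hcdf f hf hmono hrange hdep
end
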